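/- arXiv:0708.0466 — 4 statements merged into one kernel-verified Lean document; each statement's English description precedes it below -/
import Mathlib

section
/- Let H be a real inner product space and let K and L be symmetric linear operators on H, i.e. ⟨Kx, y⟩ = ⟨x, Ky⟩ and ⟨Lx, y⟩ = ⟨x, Ly⟩ for all x, y ∈ H. Suppose Kφ = κ·φ and Lψ = λ·ψ with ‖φ‖ = 1, and suppose ψ − φ = χ + Δ for vectors χ, Δ ∈ H. Then |(κ − λ)(1 + ⟨χ, φ⟩) − ⟨(K − L)(φ + χ), φ⟩| ≤ ‖Δ‖ (|κ − λ| + ‖(K − L)φ‖). (This is inequality (5.3), the first assertion of Lemma 5.1 of the paper.) -/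
open RealInnerProductSpace

/-- Inequality (5.3), the first assertion of Lemma 5.1 of Hall–Horowitz. -/
theorem stmt_2
    {H : Type*} [NormedAddCommGroup H] [InnerProductSpace ℝ H]
    (K L : H →ₗ[ℝ] H)
    (hK : ∀ x y : H, ⟪K x, y⟫ = ⟪x, K y⟫)
    (hL : ∀ x y : H, ⟪L x, y⟫ = ⟪x, L y⟫)
    (φ ψ χ Δ : H) (κ lam : ℝ)
    (hφ : K φ = κ • φ) (hψ : L ψ = lam • ψ)
    (hφnorm : ‖φ‖ = 1)
    (hdecomp : ψ - φ = χ + Δ) :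
    |(κ - lam) * (1 + ⟪χ, φ⟫) - ⟪(K - L) (φ + χ), φ⟫|
      ≤ ‖Δ‖ * (|κ - lam| + ‖(K - L) φ‖) := by
  have hψeq : ψ = φ + χ + Δ := by
    have := hdecomp
    abel_nf at this ⊢
    linear_combination (norm := abel) this
  have hφφ : ⟪φ, φ⟫ = 1 := by
    rw [real_inner_self_eq_norm_sq, hφnorm]; norm_num
  have key : (κ - lam) * ⟪ψ, φ⟫ = ⟪(K - L) ψ, φ⟫ := by
    have h1 : ⟪K ψ, φ⟫ = κ * ⟪ψ, φ⟫ := by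
      rw [hK, hφ, real_inner_smul_right]
    have h2 : ⟪L ψ, φ⟫ = lam * ⟪ψ, φ⟫ := by
      rw [hψ, real_inner_smul_left]
    simp only [LinearMap.sub_apply, inner_sub_left, h1, h2]
    ring
  have hsym : ⟪(K - L) Δ, φ⟫ = ⟪Δ, (K - L) φ⟫ := by
    simp only [LinearMap.sub_apply, inner_sub_left, inner_sub_right, hK, hL]
  have expand : (κ - lam) * (1 + ⟪χ, φ⟫) - ⟪(K - L) (φ + χ), φ⟫
      = ⟪Δ, (K - L) φ⟫ - (κ - lam) * ⟪Δ, φ⟫ := by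
    have hkey := key
    rw [hψeq] at hkey
    simp only [map_add, inner_add_left, hφφ] at hkey ⊢
    rw [← hsym]
    linarith
  rw [expand]
  have b1 : |⟪Δ, (K - L) φ⟫| ≤ ‖Δ‖ * ‖(K - L) φ‖ := abs_real_inner_le_norm _ _
  have b2 : |⟪Δ, φ⟫| ≤ ‖Δ‖ := by
    have := abs_real_inner_le_norm Δ φ
    rwa [hφnorm, mul_one] at this
  calc |⟪Δ, (K - L) φ⟫ - (κ - lam) * ⟪Δ, φ⟫|
      ≤ |⟪Δ, (K - L) φ⟫| + |(κ - lam) * ⟪Δ, φ⟫| := abs_sub _ _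
    _ ≤ ‖Δ‖ * ‖(K - L) φ‖ + |κ - lam| * ‖Δ‖ := by
        rw [abs_mul]
        gcongr
    _ = ‖Δ‖ * (|κ - lam| + ‖(K - L) φ‖) := by ring
end

section
/- Let α > 1 and β > α/2 + 1 be real numbers, let C₀ > 0, and let (κ_j)_{j≥1} be a nonincreasing sequence of positive reals with κ_j − κ_{j+1} ≥ C₀ j^{-(α+1)} for every j ≥ 1. Then there exists a constant C₁ > 0 such that for every j ≥ 1, Σ_{k≥1, k≠j} k^{-2(α+β)} (κ_j − κ_k)^{-4} ≤ C₁ (1 + j^{2α−2β+4} + log(j+1)). (This is inequality (5.25) of the paper.) -/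
/-!
Write `n = min j k` and `δ = |j - k|`. Summing the spacing condition along the shorter of
`[n, n + δ]` and `[n, 2n]`, and using that `κ` is nonincreasing, gives
`|κ j - κ k| ≥ c · min δ n · n^(-(α+1))` with `c = C₀ 2^(-(α+1))`. With `q = 2(α + β) ≥ 2`
and `n ≤ k` this bounds the `k`-th term by `c⁻⁴ n^(2α-2β+4) (k⁻² + δ⁻²)`, and since every
value of `δ` is taken by at most two indices `k`, both `∑ k⁻²` and `∑ δ⁻²` are bounded by
multiples of `ζ(2) = π²/6`.
-/

open Finset Real

lemma sum_inv_sq_le (s : Finset ℕ) : ∑ m ∈ s, ((m : ℝ) ^ 2)⁻¹ ≤ π ^ 2 / 6 := by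
  simp_rw [← one_div]
  exact sum_le_hasSum s (fun _ _ => by positivity) hasSum_zeta_two

lemma card_filter_dist_eq_le_two (s : Finset ℕ) (j m : ℕ) :
    #{k ∈ s | j.dist k = m} ≤ 2 := by
  refine (card_le_card fun k hk => ?_).trans (card_le_two (a := j - m) (b := j + m))
  rw [mem_filter, Nat.dist] at hk
  rw [mem_insert, mem_singleton]
  omega

lemma sum_inv_sq_dist_le (s : Finset ℕ) (j : ℕ) :
    ∑ k ∈ s, ((j.dist k : ℝ) ^ 2)⁻¹ ≤ 2 * (π ^ 2 / 6) :=
  calc ∑ k ∈ s, ((j.dist k : ℝ) ^ 2)⁻¹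
      = ∑ m ∈ s.image (j.dist ·), #{k ∈ s | j.dist k = m} • (((m : ℕ) : ℝ) ^ 2)⁻¹ :=
        sum_comp (s := s) (fun m : ℕ => ((m : ℝ) ^ 2)⁻¹) (j.dist ·)
    _ ≤ ∑ m ∈ s.image (j.dist ·), 2 * (((m : ℕ) : ℝ) ^ 2)⁻¹ := by
        gcongr with m
        rw [nsmul_eq_mul]
        gcongr
        exact_mod_cast card_filter_dist_eq_le_two s j m
    _ ≤ 2 * (π ^ 2 / 6) := by
        rw [← mul_sum]
        gcongr
        exact sum_inv_sq_le _

lemma inv_pow_four_le_of_le_abs {a g : ℝ} (ha : 0 < a) (h : a ≤ |g|) :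
    (g ^ 4)⁻¹ ≤ (a ^ 4)⁻¹ := by
  rw [← Even.pow_abs (by decide)]
  exact inv_anti₀ (by positivity) (pow_le_pow_left₀ ha.le h 4)

lemma rpow_le_one_add_rpow {n j e : ℝ} (hn : 1 ≤ n) (hnj : n ≤ j) : n ^ e ≤ 1 + j ^ e := by
  rcases le_total 0 e with he | he
  · linarith [rpow_le_rpow (by linarith) hnj he, rpow_nonneg zero_le_one e]
  · linarith [rpow_le_one_of_one_le_of_nonpos hn he, rpow_nonneg (by linarith : (0 : ℝ) ≤ j) e]

lemma rpow_neg_mul_inv_pow_four_le {c n k δ p q : ℝ} (hc : 0 < c) (hn : 1 ≤ n) (hnk : n ≤ k)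
    (hδ : 1 ≤ δ) (hq : 2 ≤ q) :
    k ^ (-q) * ((c * min δ n * n ^ (-p)) ^ 4)⁻¹
      ≤ (c ^ 4)⁻¹ * n ^ (4 * p - q) * ((k ^ 2)⁻¹ + (δ ^ 2)⁻¹) := by
  have hn0 : 0 < n := by linarith
  have hk0 : 0 < k := by linarith
  have hlhs : k ^ (-q) * ((c * min δ n * n ^ (-p)) ^ 4)⁻¹
      = (c ^ 4)⁻¹ * (k ^ (-q) * n ^ (4 * p) * (min δ n ^ 4)⁻¹) := by
    rw [mul_pow, mul_pow, ← rpow_natCast (n ^ (-p)), ← rpow_mul hn0.le,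
      show -p * ((4 : ℕ) : ℝ) = -(4 * p) by push_cast; ring, rpow_neg hn0.le]
    field_simp
  rw [hlhs, mul_assoc (c ^ 4)⁻¹]
  refine mul_le_mul_of_nonneg_left ?_ (by positivity)
  rcases min_choice δ n with h | h <;> rw [h]
  · have hkq : k ^ (-q) ≤ n ^ (-q) := rpow_le_rpow_of_nonpos hn0 hnk (by linarith)
    have hδ4 : (δ ^ 4)⁻¹ ≤ (δ ^ 2)⁻¹ :=
      inv_anti₀ (by positivity) (pow_le_pow_right₀ hδ (by norm_num))
    calc k ^ (-q) * n ^ (4 * p) * (δ ^ 4)⁻¹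
        ≤ n ^ (-q) * n ^ (4 * p) * (δ ^ 2)⁻¹ := by gcongr
      _ = n ^ (4 * p - q) * (δ ^ 2)⁻¹ := by rw [← rpow_add hn0, neg_add_eq_sub]
      _ ≤ n ^ (4 * p - q) * ((k ^ 2)⁻¹ + (δ ^ 2)⁻¹) := by
          gcongr; exact le_add_of_nonneg_left (by positivity)
  · have hkq : k ^ (2 - q) ≤ n ^ (2 - q) := rpow_le_rpow_of_nonpos hn0 hnk (by linarith)
    have hn2 : n ^ (4 * p - q - 2) ≤ n ^ (4 * p - q) :=
      rpow_le_rpow_of_exponent_le hn (by linarith)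
    calc k ^ (-q) * n ^ (4 * p) * (n ^ 4)⁻¹ = k ^ (2 - q) * n ^ (4 * p - 4) * (k ^ 2)⁻¹ := by
          rw [rpow_neg hk0.le, rpow_sub hk0, rpow_sub hn0, rpow_ofNat, rpow_ofNat]
          field_simp
      _ ≤ n ^ (2 - q) * n ^ (4 * p - 4) * (k ^ 2)⁻¹ := by gcongr
      _ = n ^ (4 * p - q - 2) * (k ^ 2)⁻¹ := by rw [← rpow_add hn0]; ring_nf
      _ ≤ n ^ (4 * p - q) * ((k ^ 2)⁻¹ + (δ ^ 2)⁻¹) := by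
          gcongr; exact le_add_of_nonneg_right (by positivity)

section Spacing

variable {κ : ℕ → ℝ} {C₀ p : ℝ}

lemma mul_sub_mul_rpow_neg_le_sub (hC₀ : 0 ≤ C₀) (hp : 0 ≤ p)
    (hgap : ∀ j : ℕ, 1 ≤ j → C₀ * (j : ℝ) ^ (-p) ≤ κ j - κ (j + 1))
    {n m : ℕ} (hn : 1 ≤ n) (hnm : n ≤ m) :
    C₀ * ((m : ℝ) - n) * (m : ℝ) ^ (-p) ≤ κ n - κ m := by
  induction m, hnm using Nat.le_induction with
  | base => simp
  | succ m hnm ih =>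
    have hm : (1 : ℝ) ≤ m := by exact_mod_cast hn.trans hnm
    have hnm' : (n : ℝ) ≤ m := by exact_mod_cast hnm
    have hdecay : ((m + 1 : ℕ) : ℝ) ^ (-p) ≤ (m : ℝ) ^ (-p) :=
      rpow_le_rpow_of_nonpos (by linarith) (by push_cast; linarith) (by linarith)
    calc C₀ * (((m + 1 : ℕ) : ℝ) - n) * ((m + 1 : ℕ) : ℝ) ^ (-p)
        = C₀ * ((m : ℝ) - n) * ((m + 1 : ℕ) : ℝ) ^ (-p) + C₀ * ((m + 1 : ℕ) : ℝ) ^ (-p) := by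
          push_cast; ring
      _ ≤ C₀ * ((m : ℝ) - n) * (m : ℝ) ^ (-p) + C₀ * (m : ℝ) ^ (-p) := by
          have : 0 ≤ (m : ℝ) - n := by linarith
          gcongr
      _ ≤ (κ n - κ m) + (κ m - κ (m + 1)) := add_le_add ih (hgap m (hn.trans hnm))
      _ = κ n - κ (m + 1) := by ring

lemma mul_min_mul_rpow_neg_le_sub (hC₀ : 0 ≤ C₀) (hp : 0 ≤ p)
    (hmono : ∀ j : ℕ, 1 ≤ j → κ (j + 1) ≤ κ j)
    (hgap : ∀ j : ℕ, 1 ≤ j → C₀ * (j : ℝ) ^ (-p) ≤ κ j - κ (j + 1))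
    {n m : ℕ} (hn : 1 ≤ n) (hnm : n ≤ m) :
    C₀ * min ((m : ℝ) - n) n * (2 * n : ℝ) ^ (-p) ≤ κ n - κ m := by
  set m' := min m (2 * n) with hm'
  have hnm' : n ≤ m' := le_min hnm (by omega)
  have hκ : κ m ≤ κ m' :=
    antitoneOn_nat_Ici_of_succ_le hmono (Set.mem_Ici.2 (hn.trans hnm'))
      (Set.mem_Ici.2 (hn.trans hnm)) (min_le_left _ _)
  have hcast : ((m' : ℕ) : ℝ) - n = min ((m : ℝ) - n) n := by
    rw [hm', Nat.cast_min, ← min_sub_sub_right]; push_cast; ring_nf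
  have hdecay : (2 * n : ℝ) ^ (-p) ≤ (m' : ℝ) ^ (-p) :=
    rpow_le_rpow_of_nonpos (by exact_mod_cast hn.trans hnm') (by exact_mod_cast min_le_right _ _)
      (by linarith)
  have hmin : 0 ≤ min ((m : ℝ) - n) n := by
    rw [← hcast]; exact sub_nonneg.2 (by exact_mod_cast hnm')
  calc C₀ * min ((m : ℝ) - n) n * (2 * n : ℝ) ^ (-p)
      ≤ C₀ * ((m' : ℝ) - n) * (m' : ℝ) ^ (-p) := by rw [hcast]; gcongr
    _ ≤ κ n - κ m' := mul_sub_mul_rpow_neg_le_sub hC₀ hp hgap hn hnm'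
    _ ≤ κ n - κ m := by linarith

lemma mul_rpow_neg_mul_min_dist_le_abs_sub (hC₀ : 0 ≤ C₀) (hp : 0 ≤ p)
    (hmono : ∀ j : ℕ, 1 ≤ j → κ (j + 1) ≤ κ j)
    (hgap : ∀ j : ℕ, 1 ≤ j → C₀ * (j : ℝ) ^ (-p) ≤ κ j - κ (j + 1))
    {j k : ℕ} (hj : 1 ≤ j) (hk : 1 ≤ k) :
    C₀ * 2 ^ (-p) * min (j.dist k : ℝ) (min j k : ℕ) * ((min j k : ℕ) : ℝ) ^ (-p)
      ≤ |κ j - κ k| := by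
  wlog hjk : j ≤ k generalizing j k
  · rw [Nat.dist_comm, min_comm j, abs_sub_comm]
    exact this hk hj (le_of_not_ge hjk)
  rw [min_eq_left hjk, Nat.dist_eq_sub_of_le hjk, Nat.cast_sub hjk]
  calc C₀ * 2 ^ (-p) * min ((k : ℝ) - j) j * (j : ℝ) ^ (-p)
      = C₀ * min ((k : ℝ) - j) j * (2 * j : ℝ) ^ (-p) := by
        rw [mul_rpow (by norm_num) (Nat.cast_nonneg j)]; ring
    _ ≤ κ j - κ k := mul_min_mul_rpow_neg_le_sub hC₀ hp hmono hgap hj hjk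
    _ ≤ |κ j - κ k| := le_abs_self _

lemma rpow_neg_mul_inv_sub_pow_four_le {q : ℝ} (hC₀ : 0 < C₀) (hp : 0 ≤ p) (hq : 2 ≤ q)
    (hmono : ∀ j : ℕ, 1 ≤ j → κ (j + 1) ≤ κ j)
    (hgap : ∀ j : ℕ, 1 ≤ j → C₀ * (j : ℝ) ^ (-p) ≤ κ j - κ (j + 1))
    {j k : ℕ} (hj : 1 ≤ j) (hk : 1 ≤ k) (hkj : k ≠ j) :
    (k : ℝ) ^ (-q) * ((κ j - κ k) ^ 4)⁻¹
      ≤ ((C₀ * 2 ^ (-p)) ^ 4)⁻¹ * (1 + (j : ℝ) ^ (4 * p - q))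
        * (((k : ℝ) ^ 2)⁻¹ + ((j.dist k : ℝ) ^ 2)⁻¹) := by
  set n : ℕ := min j k
  have hn : (1 : ℝ) ≤ n := by exact_mod_cast le_min hj hk
  have hdist : (1 : ℝ) ≤ j.dist k := by
    rw [Nat.dist]; exact_mod_cast (show 1 ≤ j - k + (k - j) by omega)
  have hc : 0 < C₀ * (2 : ℝ) ^ (-p) := by positivity
  calc (k : ℝ) ^ (-q) * ((κ j - κ k) ^ 4)⁻¹
      ≤ (k : ℝ) ^ (-q) * ((C₀ * 2 ^ (-p) * min (j.dist k : ℝ) n * (n : ℝ) ^ (-p)) ^ 4)⁻¹ := by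
        refine mul_le_mul_of_nonneg_left
          (inv_pow_four_le_of_le_abs (by positivity) ?_) (by positivity)
        exact mul_rpow_neg_mul_min_dist_le_abs_sub hC₀.le hp hmono hgap hj hk
    _ ≤ ((C₀ * 2 ^ (-p)) ^ 4)⁻¹ * (n : ℝ) ^ (4 * p - q)
        * (((k : ℝ) ^ 2)⁻¹ + ((j.dist k : ℝ) ^ 2)⁻¹) :=
        rpow_neg_mul_inv_pow_four_le hc hn (by exact_mod_cast min_le_right j k) hdist hq
    _ ≤ ((C₀ * 2 ^ (-p)) ^ 4)⁻¹ * (1 + (j : ℝ) ^ (4 * p - q))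
        * (((k : ℝ) ^ 2)⁻¹ + ((j.dist k : ℝ) ^ 2)⁻¹) := by
        gcongr
        exact rpow_le_one_add_rpow hn (by exact_mod_cast min_le_left j k)

end Spacing

theorem stmt_7_general
    (α β C₀ : ℝ) (hα : 1 < α) (hβ : α / 2 + 1 < β) (hC₀ : 0 < C₀)
    (κ : ℕ → ℝ)
    (hmono : ∀ j : ℕ, 1 ≤ j → κ (j + 1) ≤ κ j)
    (hgap : ∀ j : ℕ, 1 ≤ j → C₀ * (j : ℝ) ^ (-(α + 1)) ≤ κ j - κ (j + 1)) :
    ∃ C₁ : ℝ, 0 < C₁ ∧ ∀ j : ℕ, 1 ≤ j → ∀ s : Finset ℕ,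
      (∀ k ∈ s, 1 ≤ k ∧ k ≠ j) →
      ∑ k ∈ s, (k : ℝ) ^ (-(2 * (α + β))) * ((κ j - κ k) ^ 4)⁻¹
        ≤ C₁ * (1 + (j : ℝ) ^ (2 * α - 2 * β + 4) + Real.log ((j : ℝ) + 1)) := by
  set c := ((C₀ * 2 ^ (-(α + 1))) ^ 4)⁻¹
  refine ⟨c * (π ^ 2 / 2), by positivity, fun j hj s hs => ?_⟩
  have hlog : 0 ≤ Real.log ((j : ℝ) + 1) :=
    Real.log_nonneg (by linarith [Nat.cast_nonneg (α := ℝ) j])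
  have he : 4 * (α + 1) - 2 * (α + β) = 2 * α - 2 * β + 4 := by ring
  calc ∑ k ∈ s, (k : ℝ) ^ (-(2 * (α + β))) * ((κ j - κ k) ^ 4)⁻¹
      ≤ ∑ k ∈ s, c * (1 + (j : ℝ) ^ (2 * α - 2 * β + 4))
          * (((k : ℝ) ^ 2)⁻¹ + ((j.dist k : ℝ) ^ 2)⁻¹) :=
        sum_le_sum fun k hk => he ▸ rpow_neg_mul_inv_sub_pow_four_le hC₀ (by linarith)
          (by linarith) hmono hgap hj (hs k hk).1 (hs k hk).2
    _ = c * (1 + (j : ℝ) ^ (2 * α - 2 * β + 4))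
          * (∑ k ∈ s, ((k : ℝ) ^ 2)⁻¹ + ∑ k ∈ s, ((j.dist k : ℝ) ^ 2)⁻¹) := by
        rw [← mul_sum, sum_add_distrib]
    _ ≤ c * (1 + (j : ℝ) ^ (2 * α - 2 * β + 4)) * (π ^ 2 / 6 + 2 * (π ^ 2 / 6)) := by
        gcongr
        · exact sum_inv_sq_le s
        · exact sum_inv_sq_dist_le s j
    _ ≤ c * (π ^ 2 / 2) * (1 + (j : ℝ) ^ (2 * α - 2 * β + 4) + Real.log ((j : ℝ) + 1)) := by
        have : 0 ≤ c * (π ^ 2 / 2) := by positivity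
        nlinarith

/-- Inequality (5.25) of Hall–Horowitz: under the eigenvalue spacing condition
`κ_j - κ_{j+1} ≥ C₀ j^{-(α+1)}`, for each `j ≥ 1` the series
`Σ_{k ≠ j} k^{-2(α+β)} (κ_j - κ_k)^{-4}` is bounded by
`C₁ (1 + j^{2α-2β+4} + log (j+1))`.  (The series of nonnegative terms is expressed
through its partial sums over arbitrary finite sets of indices `k ≥ 1`, `k ≠ j`.) -/
theorem stmt_7
    (α β C₀ : ℝ) (hα : 1 < α) (hβ : α / 2 + 1 < β) (hC₀ : 0 < C₀)
    (κ : ℕ → ℝ)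
    (hpos : ∀ j : ℕ, 1 ≤ j → 0 < κ j)
    (hmono : ∀ j : ℕ, 1 ≤ j → κ (j + 1) ≤ κ j)
    (hgap : ∀ j : ℕ, 1 ≤ j → C₀ * (j : ℝ) ^ (-(α + 1)) ≤ κ j - κ (j + 1)) :
    ∃ C₁ : ℝ, 0 < C₁ ∧ ∀ j : ℕ, 1 ≤ j → ∀ s : Finset ℕ,
      (∀ k ∈ s, 1 ≤ k ∧ k ≠ j) →
      ∑ k ∈ s, (k : ℝ) ^ (-(2 * (α + β))) * ((κ j - κ k) ^ 4)⁻¹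
        ≤ C₁ * (1 + (j : ℝ) ^ (2 * α - 2 * β + 4) + Real.log ((j : ℝ) + 1)) :=
  stmt_7_general α β C₀ hα hβ hC₀ κ hmono hgap
end

section
/- Let α > 1, and let C₀, c₂ > 0. Let (κ_j)_{j≥1} be a nonincreasing sequence of positive reals satisfying κ_j ≤ c₂ j^{-α} and κ_j − κ_{j+1} ≥ C₀ j^{-(α+1)} for every j ≥ 1. Then there exists a constant C > 0 such that for every j ≥ 1, Σ_{k≥1, k≠j} κ_j κ_k (κ_j − κ_k)^{-2} ≤ C j². (This is the deterministic estimate underlying display (5.22) of the paper.) -/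
open Finset

private lemma anti_rpow {t : ℝ} (ht : t ≤ 0) {a b : ℕ} (ha : 1 ≤ a) (hab : a ≤ b) :
    (b:ℝ) ^ t ≤ (a:ℝ) ^ t :=
  Real.rpow_le_rpow_of_nonpos (by exact_mod_cast Nat.lt_of_lt_of_le Nat.zero_lt_one ha)
    (Nat.cast_le.2 hab) ht

private lemma sum_le_tele (g f : ℕ → ℝ) (m : ℕ)
    (hg : ∀ k, m ≤ k → 0 ≤ g k)
    (h : ∀ k, m ≤ k → g k ≤ f k - f (k+1))
    (hf : ∀ k, 0 ≤ f k)
    (t : Finset ℕ) (ht : ∀ k ∈ t, m ≤ k) :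
    ∑ k ∈ t, g k ≤ f m := by
  have key : ∀ N, m ≤ N → ∑ k ∈ Finset.Icc m N, g k ≤ f m - f (N+1) := by
    intro N hN
    induction N, hN using Nat.le_induction with
    | base =>
        rw [Finset.Icc_self, Finset.sum_singleton]
        exact h m le_rfl
    | succ N hN ih =>
        rw [Finset.sum_Icc_succ_top (by omega : m ≤ N + 1)]
        have h1 := h (N+1) (by omega)
        linarith
  rcases t.eq_empty_or_nonempty with rfl | hne
  · simpa using hf m
  · set N := t.max' hne with hNdef
    have hmN : m ≤ N := ht _ (t.max'_mem hne)
    have hsub : t ⊆ Finset.Icc m N := by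
      intro k hk
      exact Finset.mem_Icc.2 ⟨ht k hk, t.le_max' k hk⟩
    calc ∑ k ∈ t, g k ≤ ∑ k ∈ Finset.Icc m N, g k :=
          Finset.sum_le_sum_of_subset_of_nonneg hsub
            (fun k hk _ => hg k (Finset.mem_Icc.1 hk).1)
      _ ≤ f m - f (N+1) := key N hmN
      _ ≤ f m := by have := hf (N+1); linarith

private lemma sum_inv_sq (t : Finset ℕ) (ht : ∀ d ∈ t, 1 ≤ d) :
    ∑ d ∈ t, (((d:ℝ))^2)⁻¹ ≤ 2 := by
  have := sum_le_tele (fun d => (((d:ℝ))^2)⁻¹) (fun d => 2/(d:ℝ)) 1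
    (fun k _ => by positivity)
    (fun k hk => by
      have hk1 : (1:ℝ) ≤ (k:ℝ) := by exact_mod_cast hk
      have hkpos : (0:ℝ) < k := by linarith
      have hk1pos : (0:ℝ) < ((k:ℕ):ℝ) + 1 := by linarith
      rw [inv_eq_one_div, div_sub_div _ _ (ne_of_gt hkpos) (by push_cast; linarith),
        div_le_div_iff₀ (by positivity) (by positivity)]
      push_cast
      nlinarith)
    (fun k => by positivity)
    t ht
  simpa using this

private lemma rpow_step (α : ℝ) (hα : 1 < α) (K : ℝ) (hK : 1 ≤ K) :
    (α - 1) * (K + 1) ^ (-α) ≤ K ^ (1 - α) - (K + 1) ^ (1 - α) := by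
  have hKpos : (0:ℝ) < K := by linarith
  have hK1pos : (0:ℝ) < K + 1 := by linarith
  have h1 : 1 + α * (1/K) ≤ (1 + 1/K) ^ α :=
    one_add_mul_self_le_rpow_one_add
      (le_trans (by norm_num) (by positivity : (0:ℝ) ≤ 1/K)) hα.le
  have h2 : (K + 1) ^ α = K ^ α * (1 + 1/K) ^ α := by
    rw [show K + 1 = K * (1 + 1/K) by field_simp,
      Real.mul_rpow hKpos.le (by positivity)]
  have hK1a : K ^ (1 - α) * K ^ α = K := by
    rw [← Real.rpow_add hKpos]; norm_num
  have h4 : K + α ≤ K ^ (1 - α) * (K + 1) ^ α := by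
    calc K + α = K * (1 + α * (1/K)) := by field_simp
      _ ≤ K * (1 + 1/K) ^ α := mul_le_mul_of_nonneg_left h1 hKpos.le
      _ = K ^ (1 - α) * (K + 1) ^ α := by rw [h2, ← mul_assoc, hK1a]
  have e2 : (K + 1) ^ α * (K + 1) ^ (-α) = 1 := by
    rw [← Real.rpow_add hK1pos]; norm_num
  have e1 : (K + 1) ^ (1 - α) = (K + 1) * (K + 1) ^ (-α) := by
    rw [show (1 - α) = 1 + (-α) by ring, Real.rpow_add hK1pos, Real.rpow_one]
  have h5 : (K + α) * (K + 1) ^ (-α) ≤ (K ^ (1 - α) * (K + 1) ^ α) * (K + 1) ^ (-α) :=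
    mul_le_mul_of_nonneg_right h4 (Real.rpow_nonneg hK1pos.le _)
  have h6 : (K ^ (1 - α) * (K + 1) ^ α) * (K + 1) ^ (-α) = K ^ (1 - α) := by
    rw [mul_assoc, e2, mul_one]
  have h7 : (α - 1) * (K + 1) ^ (-α) + (K + 1) * (K + 1) ^ (-α)
      = (K + α) * (K + 1) ^ (-α) := by ring
  linarith

private lemma sum_rpow_tail (α : ℝ) (hα : 1 < α) (m : ℕ) (hm : 1 ≤ m)
    (t : Finset ℕ) (ht : ∀ k ∈ t, m ≤ k) :
    ∑ k ∈ t, (k:ℝ) ^ (-α) ≤ (2 ^ α / (α - 1)) * (m:ℝ) ^ (1 - α) := by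
  have hα1 : (0:ℝ) < α - 1 := by linarith
  have h2a : (0:ℝ) < (2:ℝ) ^ α := Real.rpow_pos_of_pos (by norm_num) α
  have := sum_le_tele (fun k => (k:ℝ) ^ (-α))
    (fun k => (2 ^ α / (α - 1)) * (k:ℝ) ^ (1 - α)) m
    (fun k _ => Real.rpow_nonneg (Nat.cast_nonneg k) _)
    (fun k hk => by
      have hk1 : (1:ℝ) ≤ (k:ℝ) := by exact_mod_cast le_trans hm hk
      have hkpos : (0:ℝ) < k := by linarith
      simp only [Nat.cast_add, Nat.cast_one]
      have hstep := rpow_step α hα (k:ℝ) hk1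
      -- (K+1)^(-α) ≥ 2^(-α) K^(-α)
      have hb : ((2:ℝ) * k) ^ (-α) ≤ ((k:ℝ) + 1) ^ (-α) :=
        Real.rpow_le_rpow_of_nonpos (by linarith) (by linarith) (by linarith)
      have hb2 : ((2:ℝ) * k) ^ (-α) = 2 ^ (-α) * (k:ℝ) ^ (-α) :=
        Real.mul_rpow (by norm_num) hkpos.le
      have hinv : (2:ℝ) ^ α * (2:ℝ) ^ (-α) = 1 := by
        rw [← Real.rpow_add (by norm_num : (0:ℝ) < 2)]; norm_num
      -- k^(-α) = 2^α * (2^(-α) k^(-α)) ≤ 2^α (k+1)^(-α) ≤ (2^α/(α-1)) (k^{1-α} - (k+1)^{1-α})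
      have step1 : (k:ℝ) ^ (-α) ≤ 2 ^ α * ((k:ℝ) + 1) ^ (-α) := by
        calc (k:ℝ) ^ (-α) = 2 ^ α * (2 ^ (-α) * (k:ℝ) ^ (-α)) := by
              rw [← mul_assoc, hinv, one_mul]
          _ ≤ 2 ^ α * ((k:ℝ) + 1) ^ (-α) := by
              rw [← hb2]; exact mul_le_mul_of_nonneg_left hb h2a.le
      calc (k:ℝ) ^ (-α) ≤ 2 ^ α * ((k:ℝ) + 1) ^ (-α) := step1
        _ = (2 ^ α / (α - 1)) * ((α - 1) * ((k:ℝ) + 1) ^ (-α)) := by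
            field_simp
        _ ≤ (2 ^ α / (α - 1)) * ((k:ℝ) ^ (1 - α) - ((k:ℝ) + 1) ^ (1 - α)) := by
            apply mul_le_mul_of_nonneg_left hstep (by positivity)
        _ = (2 ^ α / (α - 1)) * (k:ℝ) ^ (1 - α)
            - (2 ^ α / (α - 1)) * (((k:ℝ) + 1) ^ (1 - α)) := by ring)
    (fun k => by positivity)
    t ht
  exact this

private lemma term_bound {x y G u v : ℝ} (hG : 0 < G) (hu : 0 ≤ u) (hx : 0 ≤ x)
    (hxu : x ≤ u) (hy : 0 ≤ y) (hyv : y ≤ v) (hgap : G ≤ |x - y|) :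
    x * y * (((x - y) ^ 2)⁻¹) ≤ u * v * ((G ^ 2)⁻¹) := by
  have h1 : G ^ 2 ≤ (x - y) ^ 2 := by
    rw [← sq_abs (x - y)]
    exact pow_le_pow_left₀ hG.le hgap 2
  have h2 : ((x - y) ^ 2)⁻¹ ≤ (G ^ 2)⁻¹ := by
    apply inv_anti₀ (by positivity) h1
  have h3 : x * y ≤ u * v := mul_le_mul hxu hyv hy (le_trans hx hxu)
  exact mul_le_mul h3 h2 (by positivity) (mul_nonneg hu (hy.trans hyv))

private lemma rpow_sq {J : ℝ} (hJ : 0 < J) (a : ℝ) : (J ^ a) ^ 2 = J ^ (a * 2) := by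
  rw [← Real.rpow_natCast (J ^ a) 2, ← Real.rpow_mul hJ.le]
  norm_num

set_option maxHeartbeats 2000000 in
/-- The deterministic estimate underlying display (5.22) of Hall–Horowitz: if the
eigenvalues satisfy `κ_j ≤ c₂ j^{-α}` and the spacing condition
`κ_j - κ_{j+1} ≥ C₀ j^{-(α+1)}`, then `Σ_{k ≠ j} κ_j κ_k (κ_j - κ_k)^{-2} ≤ C j²`.
(The series of nonnegative terms is expressed through its partial sums over
arbitrary finite sets of indices `k ≥ 1`, `k ≠ j`.) -/
theorem stmt_8
    (α C₀ c₂ : ℝ) (hα : 1 < α) (hC₀ : 0 < C₀) (hc₂ : 0 < c₂)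
    (κ : ℕ → ℝ)
    (hpos : ∀ j : ℕ, 1 ≤ j → 0 < κ j)
    (hmono : ∀ j : ℕ, 1 ≤ j → κ (j + 1) ≤ κ j)
    (hupper : ∀ j : ℕ, 1 ≤ j → κ j ≤ c₂ * (j : ℝ) ^ (-α))
    (hgap : ∀ j : ℕ, 1 ≤ j → C₀ * (j : ℝ) ^ (-(α + 1)) ≤ κ j - κ (j + 1)) :
    ∃ C : ℝ, 0 < C ∧ ∀ j : ℕ, 1 ≤ j → ∀ s : Finset ℕ,
      (∀ k ∈ s, 1 ≤ k ∧ k ≠ j) →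
      ∑ k ∈ s, κ j * κ k * ((κ j - κ k) ^ 2)⁻¹ ≤ C * (j : ℝ) ^ 2 := by
  set B : ℝ := C₀ * (2:ℝ) ^ (-(α+1)) with hBdef
  have hB : 0 < B := by
    apply mul_pos hC₀ (Real.rpow_pos_of_pos (by norm_num) _)
  have hα1 : (0:ℝ) < α - 1 := by linarith
  set A₁ : ℝ := c₂^2 * (B^2)⁻¹ with hA₁def
  set A₂ : ℝ := 2 * (c₂^2 * (2:ℝ)^α * (C₀^2)⁻¹) with hA₂def
  set A₃ : ℝ := 2 * (c₂^2 * (2:ℝ)^(α+2) * (C₀^2)⁻¹) with hA₃def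
  set A₄ : ℝ := c₂^2 * (B^2)⁻¹ * ((2:ℝ)^α / (α-1)) with hA₄def
  have hA₁ : 0 < A₁ := by positivity
  have hA₂ : 0 < A₂ := by positivity
  have hA₃ : 0 < A₃ := by positivity
  have hA₄ : 0 < A₄ := by positivity
  refine ⟨A₁ + A₂ + A₃ + A₄, by positivity, ?_⟩
  intro j hj s hs
  -- global monotonicity
  have hmono' : ∀ a, 1 ≤ a → ∀ b, a ≤ b → κ b ≤ κ a := by
    intro a ha b hb
    induction b, hb using Nat.le_induction with
    | base => exact le_rfl
    | succ b hb ih => exact le_trans (hmono b (le_trans ha hb)) ih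
  -- telescoped gap bound
  have hgapall : ∀ a, 1 ≤ a → ∀ m : ℕ,
      C₀ * (m:ℝ) * (((a + m : ℕ)):ℝ) ^ (-(α+1)) ≤ κ a - κ (a + m) := by
    intro a ha m
    induction m with
    | zero => simp
    | succ m ih =>
      have h1 : C₀ * (((a + m : ℕ)):ℝ) ^ (-(α+1)) ≤ κ (a+m) - κ (a+m+1) :=
        hgap (a+m) (by omega)
      have h2 : (((a + m + 1 : ℕ)):ℝ) ^ (-(α+1)) ≤ (((a + m : ℕ)):ℝ) ^ (-(α+1)) :=
        anti_rpow (by linarith) (by omega) (by omega)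
      have h4 : C₀ * ((m:ℝ)+1) * (((a + m + 1 : ℕ)):ℝ) ^ (-(α+1))
          ≤ C₀ * ((m:ℝ)+1) * (((a + m : ℕ)):ℝ) ^ (-(α+1)) := by
        apply mul_le_mul_of_nonneg_left h2 (by positivity)
      have h5 : C₀ * ((m:ℝ)+1) * (((a + m : ℕ)):ℝ) ^ (-(α+1))
          = C₀ * (m:ℝ) * (((a + m : ℕ)):ℝ) ^ (-(α+1))
            + C₀ * (((a + m : ℕ)):ℝ) ^ (-(α+1)) := by ring
      have hcast : ((a + (m+1) : ℕ)) = ((a + m + 1 : ℕ)) := by omega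
      rw [hcast]
      push_cast
      push_cast at ih h4 h5 h1 h2
      linarith
  set J : ℝ := (j:ℝ) with hJdef
  have hJ1 : (1:ℝ) ≤ J := by rw [hJdef]; exact_mod_cast hj
  have hJpos : (0:ℝ) < J := by linarith
  have hJsplit : J * J ^ (-(α+1)) = J ^ (-α) := by
    nth_rewrite 1 [← Real.rpow_one J]
    rw [← Real.rpow_add hJpos]
    congr 1; ring
  -- the four gap estimates
  have hfar_hi : ∀ k, 2*j ≤ k → B * J ^ (-α) ≤ κ j - κ k := by
    intro k hk
    have h1 := hgapall j hj j
    have h2 : κ k ≤ κ (j + j) := hmono' (j+j) (by omega) k (by omega)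
    have h3 : C₀ * (j:ℝ) * (((j + j : ℕ)):ℝ) ^ (-(α+1)) = B * J ^ (-α) := by
      have e : (((j + j : ℕ)):ℝ) = 2 * J := by push_cast; ring
      rw [e, Real.mul_rpow (by norm_num) hJpos.le, hBdef, ← hJsplit]; ring
    rw [h3] at h1
    linarith
  have hfar_lo : ∀ k, 1 ≤ k → 2*k ≤ j → B * ((k:ℝ)) ^ (-α) ≤ κ k - κ j := by
    intro k hk hk2
    have hKpos : (0:ℝ) < (k:ℝ) := by exact_mod_cast hk
    have hKsplit : (k:ℝ) * (k:ℝ) ^ (-(α+1)) = (k:ℝ) ^ (-α) := by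
      nth_rewrite 1 [← Real.rpow_one (k:ℝ)]
      rw [← Real.rpow_add hKpos]
      congr 1; ring
    have h1 := hgapall k hk k
    have h2 : κ j ≤ κ (k + k) := hmono' (k+k) (by omega) j (by omega)
    have h3 : C₀ * (k:ℝ) * (((k + k : ℕ)):ℝ) ^ (-(α+1)) = B * (k:ℝ) ^ (-α) := by
      have e : (((k + k : ℕ)):ℝ) = 2 * (k:ℝ) := by push_cast; ring
      rw [e, Real.mul_rpow (by norm_num) hKpos.le, hBdef, ← hKsplit]; ring
    rw [h3] at h1
    linarith
  have hnear_hi : ∀ k, j < k →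
      C₀ * (((k - j : ℕ)):ℝ) * ((k:ℝ)) ^ (-(α+1)) ≤ κ j - κ k := by
    intro k hk
    have h1 := hgapall j hj (k - j)
    have e : j + (k - j) = k := by omega
    rw [e] at h1
    exact h1
  have hnear_lo : ∀ k, 1 ≤ k → k < j →
      C₀ * (((j - k : ℕ)):ℝ) * J ^ (-(α+1)) ≤ κ k - κ j := by
    intro k hk hkj
    have h1 := hgapall k hk (j - k)
    have e : k + (j - k) = j := by omega
    rw [e] at h1
    exact h1
  -- common positivity facts
  have hQpos : (0:ℝ) < J ^ (-α) := Real.rpow_pos_of_pos hJpos _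
  have hRpos : (0:ℝ) < J ^ (-(α+1)) := Real.rpow_pos_of_pos hJpos _
  have hQinv : (J ^ (-α))⁻¹ = J ^ α := by rw [Real.rpow_neg hJpos.le, inv_inv]
  have hQR : (J ^ (-α))^2 * ((J ^ (-(α+1)))^2)⁻¹ = J ^ 2 := by
    rw [rpow_sq hJpos, rpow_sq hJpos, ← Real.rpow_neg hJpos.le, ← Real.rpow_add hJpos,
        ← Real.rpow_natCast J 2]
    congr 1; push_cast; ring
  -- the four pieces
  set L := s.filter (fun k => k < j) with hLdef
  set R := s.filter (fun k => ¬ k < j) with hRdef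
  set s₁ := L.filter (fun k => 2*k ≤ j) with hs₁def
  set s₂ := L.filter (fun k => ¬ 2*k ≤ j) with hs₂def
  set s₃ := R.filter (fun k => k < 2*j) with hs₃def
  set s₄ := R.filter (fun k => ¬ k < 2*j) with hs₄def
  have mem₁ : ∀ k ∈ s₁, 1 ≤ k ∧ 2*k ≤ j ∧ k < j := by
    intro k hk
    simp only [hs₁def, hLdef, Finset.mem_filter] at hk
    exact ⟨(hs k hk.1.1).1, hk.2, hk.1.2⟩
  have mem₂ : ∀ k ∈ s₂, 1 ≤ k ∧ j < 2*k ∧ k < j := by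
    intro k hk
    simp only [hs₂def, hLdef, Finset.mem_filter] at hk
    exact ⟨(hs k hk.1.1).1, by omega, hk.1.2⟩
  have mem₃ : ∀ k ∈ s₃, j < k ∧ k < 2*j := by
    intro k hk
    simp only [hs₃def, hRdef, Finset.mem_filter] at hk
    have := (hs k hk.1.1).2
    exact ⟨by omega, hk.2⟩
  have mem₄ : ∀ k ∈ s₄, 2*j ≤ k := by
    intro k hk
    simp only [hs₄def, hRdef, Finset.mem_filter] at hk
    omega
  have e0 : ∑ k ∈ s, κ j * κ k * ((κ j - κ k) ^ 2)⁻¹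
      = (∑ k ∈ s₁, κ j * κ k * ((κ j - κ k) ^ 2)⁻¹
         + ∑ k ∈ s₂, κ j * κ k * ((κ j - κ k) ^ 2)⁻¹)
        + (∑ k ∈ s₃, κ j * κ k * ((κ j - κ k) ^ 2)⁻¹
           + ∑ k ∈ s₄, κ j * κ k * ((κ j - κ k) ^ 2)⁻¹) := by
    rw [← Finset.sum_filter_add_sum_filter_not s (fun k => k < j)
          (fun k => κ j * κ k * ((κ j - κ k) ^ 2)⁻¹)]
    congr 1
    · exact (Finset.sum_filter_add_sum_filter_not L (fun k => 2*k ≤ j) _).symm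
    · exact (Finset.sum_filter_add_sum_filter_not R (fun k => k < 2*j) _).symm
  have hJJ : J ≤ J^2 := by nlinarith
  -- regime 1 : 1 ≤ k, 2k ≤ j
  have hb₁ : ∑ k ∈ s₁, κ j * κ k * ((κ j - κ k) ^ 2)⁻¹ ≤ A₁ * J^2 := by
    have hterm : ∀ k ∈ s₁, κ j * κ k * ((κ j - κ k) ^ 2)⁻¹ ≤ c₂^2 * (B^2)⁻¹ := by
      intro k hk
      obtain ⟨hk1, hk2, hkj⟩ := mem₁ k hk
      have hKpos : (0:ℝ) < (k:ℝ) := by exact_mod_cast hk1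
      have hPpos : (0:ℝ) < (k:ℝ) ^ (-α) := Real.rpow_pos_of_pos hKpos _
      have hgaplo := hfar_lo k hk1 hk2
      have habs : B * (k:ℝ) ^ (-α) ≤ |κ j - κ k| := by
        rw [abs_sub_comm, abs_of_nonneg (le_trans (mul_pos hB hPpos).le hgaplo)]
        exact hgaplo
      have h1 : κ j * κ k * ((κ j - κ k) ^ 2)⁻¹
          ≤ (c₂ * J ^ (-α)) * (c₂ * (k:ℝ) ^ (-α)) * ((B * (k:ℝ) ^ (-α))^2)⁻¹ :=
        term_bound (by positivity) (by positivity) (hpos j hj).le (hupper j hj)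
          (hpos k hk1).le (hupper k hk1) habs
      have h2 : (c₂ * J ^ (-α)) * (c₂ * (k:ℝ) ^ (-α)) * ((B * (k:ℝ) ^ (-α))^2)⁻¹
          = c₂^2 * (B^2)⁻¹ * (J ^ (-α) * (((k:ℝ) ^ (-α))⁻¹)) := by
        have hBne : B ≠ 0 := ne_of_gt hB
        have hPne : (k:ℝ) ^ (-α) ≠ 0 := ne_of_gt hPpos
        field_simp
      have hPinv : ((k:ℝ) ^ (-α))⁻¹ = (k:ℝ) ^ α := by
        rw [Real.rpow_neg hKpos.le, inv_inv]
      have h3 : J ^ (-α) * (((k:ℝ) ^ (-α))⁻¹) ≤ 1 := by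
        rw [hPinv]
        have h4 : (k:ℝ) ^ α ≤ J ^ α := by
          apply Real.rpow_le_rpow hKpos.le _ (by linarith)
          rw [hJdef]; exact_mod_cast hkj.le
        have h5 : J ^ (-α) * J ^ α = 1 := by
          rw [← Real.rpow_add hJpos]; simp
        calc J ^ (-α) * (k:ℝ) ^ α ≤ J ^ (-α) * J ^ α :=
              mul_le_mul_of_nonneg_left h4 hQpos.le
          _ = 1 := h5
      calc κ j * κ k * ((κ j - κ k) ^ 2)⁻¹
          ≤ (c₂ * J ^ (-α)) * (c₂ * (k:ℝ) ^ (-α)) * ((B * (k:ℝ) ^ (-α))^2)⁻¹ := h1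
        _ = c₂^2 * (B^2)⁻¹ * (J ^ (-α) * (((k:ℝ) ^ (-α))⁻¹)) := h2
        _ ≤ c₂^2 * (B^2)⁻¹ * 1 := mul_le_mul_of_nonneg_left h3 (by positivity)
        _ = c₂^2 * (B^2)⁻¹ := mul_one _
    have hcard : (s₁.card : ℝ) ≤ J := by
      have hsub : s₁ ⊆ Finset.range j := fun k hk => Finset.mem_range.2 (mem₁ k hk).2.2
      have h := Finset.card_le_card hsub
      rw [Finset.card_range] at h
      rw [hJdef]; exact_mod_cast h
    have hcpos : (0:ℝ) < c₂^2 * (B^2)⁻¹ := by positivity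
    calc ∑ k ∈ s₁, κ j * κ k * ((κ j - κ k) ^ 2)⁻¹
        ≤ ∑ _k ∈ s₁, c₂^2 * (B^2)⁻¹ := Finset.sum_le_sum hterm
      _ = (s₁.card : ℝ) * (c₂^2 * (B^2)⁻¹) := by rw [Finset.sum_const, nsmul_eq_mul]
      _ ≤ J * (c₂^2 * (B^2)⁻¹) := mul_le_mul_of_nonneg_right hcard hcpos.le
      _ ≤ A₁ * J^2 := by
          rw [hA₁def]
          nlinarith [mul_le_mul_of_nonneg_left hJJ hcpos.le]
  -- regime 2 : j/2 < k < j
  have hb₂ : ∑ k ∈ s₂, κ j * κ k * ((κ j - κ k) ^ 2)⁻¹ ≤ A₂ * J^2 := by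
    have hterm : ∀ k ∈ s₂, κ j * κ k * ((κ j - κ k) ^ 2)⁻¹
        ≤ (c₂^2 * (2:ℝ)^α * (C₀^2)⁻¹) * J^2 * (((((j - k : ℕ)):ℝ))^2)⁻¹ := by
      intro k hk
      obtain ⟨hk1, hk2, hkj⟩ := mem₂ k hk
      have hKpos : (0:ℝ) < (k:ℝ) := by exact_mod_cast hk1
      set D : ℝ := (((j - k : ℕ)):ℝ) with hDdef
      have hD1 : (1:ℝ) ≤ D := by rw [hDdef]; exact_mod_cast (by omega : 1 ≤ j - k)
      have hDpos : (0:ℝ) < D := by linarith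
      have hgaplo := hnear_lo k hk1 hkj
      have habs : C₀ * D * J ^ (-(α+1)) ≤ |κ j - κ k| := by
        rw [abs_sub_comm, abs_of_nonneg (le_trans (mul_pos (mul_pos hC₀ hDpos) hRpos).le hgaplo)]
        exact hgaplo
      have hPle : (k:ℝ) ^ (-α) ≤ (2:ℝ)^α * J ^ (-α) := by
        have h1 : J / 2 ≤ (k:ℝ) := by
          have : J ≤ 2 * (k:ℝ) := by
            rw [hJdef]; exact_mod_cast hk2.le
          linarith
        have h2 : (k:ℝ) ^ (-α) ≤ (J/2) ^ (-α) :=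
          Real.rpow_le_rpow_of_nonpos (by linarith) h1 (by linarith)
        have h3 : (J/2) ^ (-α) = J ^ (-α) * ((2:ℝ)⁻¹) ^ (-α) := by
          rw [div_eq_mul_inv, Real.mul_rpow hJpos.le (by norm_num)]
        have h4 : ((2:ℝ)⁻¹) ^ (-α) = (2:ℝ)^α := by
          rw [← Real.rpow_neg_one (2:ℝ), ← Real.rpow_mul (by norm_num)]
          norm_num
        rw [h3, h4] at h2
        linarith [h2]
      have hyv : κ k ≤ c₂ * ((2:ℝ)^α * J ^ (-α)) :=
        (hupper k hk1).trans (by nlinarith)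
      have h1 : κ j * κ k * ((κ j - κ k) ^ 2)⁻¹
          ≤ (c₂ * J ^ (-α)) * (c₂ * ((2:ℝ)^α * J ^ (-α))) * ((C₀ * D * J ^ (-(α+1)))^2)⁻¹ :=
        term_bound (by positivity) (by positivity) (hpos j hj).le (hupper j hj)
          (hpos k hk1).le hyv habs
      have h2 : (c₂ * J ^ (-α)) * (c₂ * ((2:ℝ)^α * J ^ (-α))) * ((C₀ * D * J ^ (-(α+1)))^2)⁻¹
          = (c₂^2 * (2:ℝ)^α * (C₀^2)⁻¹) * ((J ^ (-α))^2 * ((J ^ (-(α+1)))^2)⁻¹) * (D^2)⁻¹ := by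
        have hC₀ne : C₀ ≠ 0 := ne_of_gt hC₀
        have hDne : D ≠ 0 := ne_of_gt hDpos
        have hRne : J ^ (-(α+1)) ≠ 0 := ne_of_gt hRpos
        field_simp
      rw [h2, hQR] at h1
      exact h1
    have hA₂' : (0:ℝ) < c₂^2 * (2:ℝ)^α * (C₀^2)⁻¹ := by positivity
    have hinj : ∀ x ∈ s₂, ∀ y ∈ s₂, j - x = j - y → x = y := by
      intro x hx y hy hxy
      have h1 := mem₂ x hx
      have h2 := mem₂ y hy
      omega
    have hsum2 : ∑ k ∈ s₂, ((((j - k : ℕ)):ℝ)^2)⁻¹ ≤ 2 := by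
      have himg : ∑ d ∈ s₂.image (fun k => j - k), (((d:ℝ))^2)⁻¹
          = ∑ k ∈ s₂, ((((j - k : ℕ)):ℝ)^2)⁻¹ := Finset.sum_image hinj
      rw [← himg]
      apply sum_inv_sq
      intro d hd
      obtain ⟨k, hk, rfl⟩ := Finset.mem_image.1 hd
      have := mem₂ k hk
      omega
    calc ∑ k ∈ s₂, κ j * κ k * ((κ j - κ k) ^ 2)⁻¹
        ≤ ∑ k ∈ s₂, (c₂^2 * (2:ℝ)^α * (C₀^2)⁻¹) * J^2 * (((((j - k : ℕ)):ℝ))^2)⁻¹ :=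
          Finset.sum_le_sum hterm
      _ = (c₂^2 * (2:ℝ)^α * (C₀^2)⁻¹) * J^2 * ∑ k ∈ s₂, (((((j - k : ℕ)):ℝ))^2)⁻¹ := by
          rw [Finset.mul_sum]
      _ ≤ (c₂^2 * (2:ℝ)^α * (C₀^2)⁻¹) * J^2 * 2 :=
          mul_le_mul_of_nonneg_left hsum2 (by positivity)
      _ = A₂ * J^2 := by rw [hA₂def]; ring
  -- regime 3 : j < k < 2j
  have hb₃ : ∑ k ∈ s₃, κ j * κ k * ((κ j - κ k) ^ 2)⁻¹ ≤ A₃ * J^2 := by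
    have hterm : ∀ k ∈ s₃, κ j * κ k * ((κ j - κ k) ^ 2)⁻¹
        ≤ (c₂^2 * (2:ℝ)^(α+2) * (C₀^2)⁻¹) * J^2 * (((((k - j : ℕ)):ℝ))^2)⁻¹ := by
      intro k hk
      obtain ⟨hjk, hk2j⟩ := mem₃ k hk
      have hk1 : 1 ≤ k := by omega
      have hKpos : (0:ℝ) < (k:ℝ) := by exact_mod_cast hk1
      set D : ℝ := (((k - j : ℕ)):ℝ) with hDdef
      have hD1 : (1:ℝ) ≤ D := by rw [hDdef]; exact_mod_cast (by omega : 1 ≤ k - j)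
      have hDpos : (0:ℝ) < D := by linarith
      have hRkpos : (0:ℝ) < (k:ℝ) ^ (-(α+1)) := Real.rpow_pos_of_pos hKpos _
      have hgaphi := hnear_hi k hjk
      have habs : C₀ * D * (k:ℝ) ^ (-(α+1)) ≤ |κ j - κ k| := by
        rw [abs_of_nonneg (le_trans (mul_pos (mul_pos hC₀ hDpos) hRkpos).le hgaphi)]
        exact hgaphi
      have h1 : κ j * κ k * ((κ j - κ k) ^ 2)⁻¹
          ≤ (c₂ * J ^ (-α)) * (c₂ * (k:ℝ) ^ (-α)) * ((C₀ * D * (k:ℝ) ^ (-(α+1)))^2)⁻¹ :=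
        term_bound (by positivity) (by positivity) (hpos j hj).le (hupper j hj)
          (hpos k hk1).le (hupper k hk1) habs
      have h2 : (c₂ * J ^ (-α)) * (c₂ * (k:ℝ) ^ (-α)) * ((C₀ * D * (k:ℝ) ^ (-(α+1)))^2)⁻¹
          = (c₂^2 * (C₀^2)⁻¹) * (J ^ (-α) * ((k:ℝ) ^ (-α) * (((k:ℝ) ^ (-(α+1)))^2)⁻¹)) * (D^2)⁻¹ := by
        have hC₀ne : C₀ ≠ 0 := ne_of_gt hC₀
        have hDne : D ≠ 0 := ne_of_gt hDpos
        have hRkne : (k:ℝ) ^ (-(α+1)) ≠ 0 := ne_of_gt hRkpos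
        field_simp
      have hPR : (k:ℝ) ^ (-α) * (((k:ℝ) ^ (-(α+1)))^2)⁻¹ = (k:ℝ) ^ (α+2) := by
        rw [rpow_sq hKpos, ← Real.rpow_neg hKpos.le, ← Real.rpow_add hKpos]
        congr 1; ring
      have hKle : (k:ℝ) ^ (α+2) ≤ (2:ℝ)^(α+2) * J^(α+2) := by
        have h4 : (k:ℝ) ≤ 2 * J := by
          rw [hJdef]
          have : (k:ℝ) ≤ ((2*j : ℕ):ℝ) := by exact_mod_cast hk2j.le
          push_cast at this
          linarith
        calc (k:ℝ) ^ (α+2) ≤ (2*J) ^ (α+2) :=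
              Real.rpow_le_rpow hKpos.le h4 (by linarith)
          _ = (2:ℝ)^(α+2) * J^(α+2) := Real.mul_rpow (by norm_num) hJpos.le
      have hJa2 : J ^ (-α) * J ^ (α+2) = J ^ 2 := by
        rw [← Real.rpow_add hJpos, ← Real.rpow_natCast J 2]
        congr 1; push_cast; ring
      have h3 : J ^ (-α) * ((k:ℝ) ^ (-α) * (((k:ℝ) ^ (-(α+1)))^2)⁻¹)
          ≤ (2:ℝ)^(α+2) * J^2 := by
        rw [hPR]
        calc J ^ (-α) * (k:ℝ) ^ (α+2) ≤ J ^ (-α) * ((2:ℝ)^(α+2) * J^(α+2)) :=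
              mul_le_mul_of_nonneg_left hKle hQpos.le
          _ = (2:ℝ)^(α+2) * (J ^ (-α) * J ^ (α+2)) := by ring
          _ = (2:ℝ)^(α+2) * J^2 := by rw [hJa2]
      calc κ j * κ k * ((κ j - κ k) ^ 2)⁻¹
          ≤ (c₂ * J ^ (-α)) * (c₂ * (k:ℝ) ^ (-α)) * ((C₀ * D * (k:ℝ) ^ (-(α+1)))^2)⁻¹ := h1
        _ = (c₂^2 * (C₀^2)⁻¹) * (J ^ (-α) * ((k:ℝ) ^ (-α) * (((k:ℝ) ^ (-(α+1)))^2)⁻¹)) * (D^2)⁻¹ := h2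
        _ ≤ (c₂^2 * (C₀^2)⁻¹) * ((2:ℝ)^(α+2) * J^2) * (D^2)⁻¹ := by
            apply mul_le_mul_of_nonneg_right _ (by positivity)
            exact mul_le_mul_of_nonneg_left h3 (by positivity)
        _ = (c₂^2 * (2:ℝ)^(α+2) * (C₀^2)⁻¹) * J^2 * (D^2)⁻¹ := by ring
    have hinj : ∀ x ∈ s₃, ∀ y ∈ s₃, x - j = y - j → x = y := by
      intro x hx y hy hxy
      have h1 := mem₃ x hx
      have h2 := mem₃ y hy
      omega
    have hsum3 : ∑ k ∈ s₃, ((((k - j : ℕ)):ℝ)^2)⁻¹ ≤ 2 := by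
      have himg : ∑ d ∈ s₃.image (fun k => k - j), (((d:ℝ))^2)⁻¹
          = ∑ k ∈ s₃, ((((k - j : ℕ)):ℝ)^2)⁻¹ := Finset.sum_image hinj
      rw [← himg]
      apply sum_inv_sq
      intro d hd
      obtain ⟨k, hk, rfl⟩ := Finset.mem_image.1 hd
      have := mem₃ k hk
      omega
    calc ∑ k ∈ s₃, κ j * κ k * ((κ j - κ k) ^ 2)⁻¹
        ≤ ∑ k ∈ s₃, (c₂^2 * (2:ℝ)^(α+2) * (C₀^2)⁻¹) * J^2 * (((((k - j : ℕ)):ℝ))^2)⁻¹ :=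
          Finset.sum_le_sum hterm
      _ = (c₂^2 * (2:ℝ)^(α+2) * (C₀^2)⁻¹) * J^2 * ∑ k ∈ s₃, (((((k - j : ℕ)):ℝ))^2)⁻¹ := by
          rw [Finset.mul_sum]
      _ ≤ (c₂^2 * (2:ℝ)^(α+2) * (C₀^2)⁻¹) * J^2 * 2 :=
          mul_le_mul_of_nonneg_left hsum3 (by positivity)
      _ = A₃ * J^2 := by rw [hA₃def]; ring
  -- regime 4 : k ≥ 2j
  have hb₄ : ∑ k ∈ s₄, κ j * κ k * ((κ j - κ k) ^ 2)⁻¹ ≤ A₄ * J^2 := by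
    have hterm : ∀ k ∈ s₄, κ j * κ k * ((κ j - κ k) ^ 2)⁻¹
        ≤ (c₂^2 * (B^2)⁻¹ * J^α) * (k:ℝ) ^ (-α) := by
      intro k hk
      have hk2j := mem₄ k hk
      have hk1 : 1 ≤ k := by omega
      have hKpos : (0:ℝ) < (k:ℝ) := by exact_mod_cast hk1
      have hgaphi := hfar_hi k hk2j
      have habs : B * J ^ (-α) ≤ |κ j - κ k| := by
        rw [abs_of_nonneg (le_trans (mul_pos hB hQpos).le hgaphi)]
        exact hgaphi
      have h1 : κ j * κ k * ((κ j - κ k) ^ 2)⁻¹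
          ≤ (c₂ * J ^ (-α)) * (c₂ * (k:ℝ) ^ (-α)) * ((B * J ^ (-α))^2)⁻¹ :=
        term_bound (by positivity) (by positivity) (hpos j hj).le (hupper j hj)
          (hpos k hk1).le (hupper k hk1) habs
      have h2 : (c₂ * J ^ (-α)) * (c₂ * (k:ℝ) ^ (-α)) * ((B * J ^ (-α))^2)⁻¹
          = (c₂^2 * (B^2)⁻¹ * (J ^ (-α))⁻¹) * (k:ℝ) ^ (-α) := by
        have hBne : B ≠ 0 := ne_of_gt hB
        have hQne : J ^ (-α) ≠ 0 := ne_of_gt hQpos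
        field_simp
      rw [h2, hQinv] at h1
      exact h1
    have htail : ∑ k ∈ s₄, (k:ℝ) ^ (-α) ≤ ((2:ℝ)^α / (α-1)) * J ^ (1-α) := by
      have h1 := sum_rpow_tail α hα (2*j) (by omega) s₄ mem₄
      have h2 : (((2*j : ℕ)):ℝ) ^ (1-α) ≤ J ^ (1-α) := by
        rw [hJdef]
        exact anti_rpow (by linarith) hj (by omega)
      have h3 : (0:ℝ) < (2:ℝ)^α / (α-1) := by positivity
      calc ∑ k ∈ s₄, (k:ℝ) ^ (-α) ≤ ((2:ℝ)^α / (α-1)) * (((2*j : ℕ)):ℝ) ^ (1-α) := h1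
        _ ≤ ((2:ℝ)^α / (α-1)) * J ^ (1-α) := mul_le_mul_of_nonneg_left h2 h3.le
    have hJa1 : J ^ α * J ^ (1-α) = J := by
      rw [← Real.rpow_add hJpos, show α + (1-α) = 1 by ring, Real.rpow_one]
    have hsum4nn : (0:ℝ) ≤ ∑ k ∈ s₄, (k:ℝ) ^ (-α) :=
      Finset.sum_nonneg fun k _ => Real.rpow_nonneg (Nat.cast_nonneg k) _
    have hcpos : (0:ℝ) < c₂^2 * (B^2)⁻¹ * J^α := by positivity
    calc ∑ k ∈ s₄, κ j * κ k * ((κ j - κ k) ^ 2)⁻¹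
        ≤ ∑ k ∈ s₄, (c₂^2 * (B^2)⁻¹ * J^α) * (k:ℝ) ^ (-α) := Finset.sum_le_sum hterm
      _ = (c₂^2 * (B^2)⁻¹ * J^α) * ∑ k ∈ s₄, (k:ℝ) ^ (-α) := by rw [Finset.mul_sum]
      _ ≤ (c₂^2 * (B^2)⁻¹ * J^α) * (((2:ℝ)^α / (α-1)) * J ^ (1-α)) :=
          mul_le_mul_of_nonneg_left htail hcpos.le
      _ = (c₂^2 * (B^2)⁻¹ * ((2:ℝ)^α / (α-1))) * (J ^ α * J ^ (1-α)) := by ring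
      _ = A₄ * J := by rw [hJa1, hA₄def]
      _ ≤ A₄ * J^2 := mul_le_mul_of_nonneg_left hJJ hA₄.le
  rw [e0]
  linarith
end

section
/- Let α > 1 and β > α/2 + 1 be real numbers, let C₀ > 0, and let (κ_j)_{j≥1} be a nonincreasing sequence of positive reals with κ_j − κ_{j+1} ≥ C₀ j^{-(α+1)} for every j ≥ 1. Then there exists a constant C > 0 such that for every j ≥ 1, Σ_{k≥1, k≠j} k^{-(α+β)} |κ_j − κ_k|^{-1} ≤ C. (This is the deterministic series bound used in display (5.27) of the paper.) -/
noncomputable def hh_g (α β C₀ : ℝ) (j k : ℕ) : ℝ :=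
  if 1 ≤ k ∧ k < 2*j ∧ k ≠ j then
    (2:ℝ)^(α+β)/C₀ * (j:ℝ)^(1-β) * |(k:ℝ) - (j:ℝ)| ^ (-(1/2):ℝ) else 0

lemma hh_g_nonneg (α β C₀ : ℝ) (hC₀ : 0 < C₀) (j k : ℕ) : 0 ≤ hh_g α β C₀ j k := by
  unfold hh_g
  split
  · positivity
  · exact le_refl 0

lemma hh_gap' (α C₀ : ℝ) (κ : ℕ → ℝ)
    (hgap : ∀ j : ℕ, 1 ≤ j → C₀ * (j : ℝ) ^ (-(α + 1)) ≤ κ j - κ (j + 1)) :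
    ∀ b a : ℕ, 1 ≤ a → a < b →
      C₀ * ∑ l ∈ Finset.Ico a b, (l : ℝ) ^ (-(α + 1)) ≤ κ a - κ b := by
  intro b
  induction b with
  | zero => intro a ha hab; omega
  | succ b ih =>
    intro a ha hab
    rcases Nat.lt_or_ge a b with h | h
    · rw [Finset.sum_Ico_succ_top (le_of_lt h), mul_add]
      have h1 := ih a ha h
      have h2 := hgap b (by omega)
      linarith
    · have : a = b := by omega
      subst this
      rw [Finset.sum_Ico_succ_top (le_refl a), Finset.Ico_self, Finset.sum_empty, zero_add]
      exact hgap a ha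

lemma hh_key (α β C₀ : ℝ) (hα : 1 < α) (hβ : α / 2 + 1 < β) (hC₀ : 0 < C₀)
    (κ : ℕ → ℝ)
    (hgap : ∀ j : ℕ, 1 ≤ j → C₀ * (j : ℝ) ^ (-(α + 1)) ≤ κ j - κ (j + 1))
    (j k : ℕ) (hj : 1 ≤ j) (hk : 1 ≤ k) (hne : k ≠ j) :
    (k : ℝ) ^ (-(α + β)) * |κ j - κ k|⁻¹ ≤
      (2:ℝ)^(α+β)/C₀ * (k:ℝ)^(-β) + hh_g α β C₀ j k := by
  have hk1 : (1:ℝ) ≤ (k:ℝ) := by exact_mod_cast hk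
  have hj1 : (1:ℝ) ≤ (j:ℝ) := by exact_mod_cast hj
  have hk0 : (0:ℝ) < (k:ℝ) := by linarith
  have hj0 : (0:ℝ) < (j:ℝ) := by linarith
  have hβ1 : (1:ℝ) < β := by linarith
  have h2two : (2:ℝ) ≤ 2^(α+β) := by
    calc (2:ℝ) = 2^(1:ℝ) := (Real.rpow_one 2).symm
    _ ≤ 2^(α+β) := Real.rpow_le_rpow_of_exponent_le (by norm_num) (by linarith)
  have h2one : (1:ℝ) ≤ 2^(α+β) := by linarith
  have h2a1 : (2:ℝ)^(α+1) ≤ 2^(α+β) := Real.rpow_le_rpow_of_exponent_le (by norm_num) (by linarith)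
  have hkk : ∀ c : ℝ, (k:ℝ)^(-(α+β)) * (k:ℝ)^c = (k:ℝ)^(c-(α+β)) := by
    intro c; rw [← Real.rpow_add hk0]; congr 1; ring
  rcases Nat.lt_or_ge j k with hjk | hjk
  · -- Case A : j < k
    have hcast : (0:ℝ) < (k:ℝ) - j := by
      have : (j:ℝ) < k := by exact_mod_cast hjk
      linarith
    have hg := hh_gap' α C₀ κ hgap k j hj hjk
    have hlow : ((k:ℝ) - j) * (k:ℝ)^(-(α+1)) ≤ ∑ l ∈ Finset.Ico j k, (l:ℝ)^(-(α+1)) := by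
      have hcard := Finset.card_nsmul_le_sum (Finset.Ico j k)
        (fun l => (l:ℝ)^(-(α+1))) ((k:ℝ)^(-(α+1)))
        (fun l hl => by
          simp only [Finset.mem_Ico] at hl
          have hl0 : (0:ℝ) < l := by
            have : 1 ≤ l := le_trans hj hl.1
            exact_mod_cast this
          exact Real.rpow_le_rpow_of_nonpos hl0 (by exact_mod_cast hl.2.le) (by linarith))
      rw [Nat.card_Ico, nsmul_eq_mul, Nat.cast_sub hjk.le] at hcard
      exact hcard
    set D : ℝ := C₀ * (((k:ℝ) - j) * (k:ℝ)^(-(α+1))) with hD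
    have hD0 : 0 < D := by
      have := Real.rpow_pos_of_pos hk0 (-(α+1))
      positivity
    have hDle : D ≤ κ j - κ k := by
      have := mul_le_mul_of_nonneg_left hlow hC₀.le
      linarith
    have habs : |κ j - κ k| = κ j - κ k := abs_of_pos (lt_of_lt_of_le hD0 hDle)
    have hinv : |κ j - κ k|⁻¹ ≤ D⁻¹ := by
      rw [habs]; exact inv_anti₀ hD0 hDle
    have hterm : (k:ℝ)^(-(α+β)) * |κ j - κ k|⁻¹ ≤ (k:ℝ)^(1-β) * (C₀ * ((k:ℝ)-j))⁻¹ := by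
      have h1 : (k:ℝ)^(-(α+β)) * |κ j - κ k|⁻¹ ≤ (k:ℝ)^(-(α+β)) * D⁻¹ :=
        mul_le_mul_of_nonneg_left hinv (Real.rpow_nonneg hk0.le _)
      have h2 : (k:ℝ)^(-(α+β)) * D⁻¹ = (k:ℝ)^(1-β) * (C₀ * ((k:ℝ)-j))⁻¹ := by
        rw [hD, Real.rpow_neg hk0.le (α+1)]
        rw [mul_inv, mul_inv, inv_inv, mul_inv]
        have := hkk (α+1)
        have e : (1:ℝ)-β = (α+1)-(α+β) := by ring
        rw [e, ← this]
        ring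
      linarith
    rcases Nat.lt_or_ge k (2*j) with hk2j | hk2j
    · -- A2 : j < k < 2j
      have hgx : hh_g α β C₀ j k
          = 2^(α+β)/C₀ * (j:ℝ)^(1-β) * |(k:ℝ) - (j:ℝ)| ^ (-(1/2):ℝ) := by
        unfold hh_g; rw [if_pos ⟨hk, hk2j, hne⟩]
      have habs2 : |(k:ℝ) - (j:ℝ)| = (k:ℝ) - j := abs_of_pos hcast
      have hone : (1:ℝ) ≤ (k:ℝ) - j := by
        have : (j:ℝ) + 1 ≤ k := by exact_mod_cast hjk
        linarith
      have b1 : (k:ℝ)^(1-β) ≤ (j:ℝ)^(1-β) :=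
        Real.rpow_le_rpow_of_nonpos hj0 (by exact_mod_cast hjk.le) (by linarith)
      have b2 : ((k:ℝ)-j)⁻¹ ≤ ((k:ℝ)-j)^(-(1/2):ℝ) := by
        rw [← Real.rpow_neg_one]
        exact Real.rpow_le_rpow_of_exponent_le hone (by norm_num)
      have key : (k:ℝ)^(1-β) * (C₀ * ((k:ℝ)-j))⁻¹ ≤
          2^(α+β)/C₀ * (j:ℝ)^(1-β) * ((k:ℝ)-j)^(-(1/2):ℝ) := by
        rw [mul_inv]
        calc (k:ℝ)^(1-β) * (C₀⁻¹ * ((k:ℝ)-j)⁻¹)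
            = C₀⁻¹ * ((k:ℝ)^(1-β) * ((k:ℝ)-j)⁻¹) := by ring
          _ ≤ C₀⁻¹ * ((j:ℝ)^(1-β) * ((k:ℝ)-j)^(-(1/2):ℝ)) := by
              apply mul_le_mul_of_nonneg_left _ (by positivity)
              exact mul_le_mul b1 b2 (by positivity) (by positivity)
          _ ≤ C₀⁻¹ * (2^(α+β) * ((j:ℝ)^(1-β) * ((k:ℝ)-j)^(-(1/2):ℝ))) := by
              apply mul_le_mul_of_nonneg_left _ (by positivity)
              exact le_mul_of_one_le_left (by positivity) h2one
          _ = 2^(α+β)/C₀ * (j:ℝ)^(1-β) * ((k:ℝ)-j)^(-(1/2):ℝ) := by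
              rw [div_eq_mul_inv]; ring
      have hfirst : (0:ℝ) ≤ 2^(α+β)/C₀ * (k:ℝ)^(-β) := by positivity
      rw [hgx, habs2]
      linarith
    · -- A1 : k ≥ 2j
      have hgx : hh_g α β C₀ j k = 0 := by
        unfold hh_g; rw [if_neg]; push_neg; intro _ h; omega
      have hhalf : (k:ℝ)/2 ≤ (k:ℝ) - j := by
        have : 2*(j:ℝ) ≤ (k:ℝ) := by exact_mod_cast hk2j
        linarith
      have key : (k:ℝ)^(1-β) * (C₀ * ((k:ℝ)-j))⁻¹ ≤ 2^(α+β)/C₀ * (k:ℝ)^(-β) := by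
        have hd : (C₀ * ((k:ℝ)-j))⁻¹ ≤ (C₀ * ((k:ℝ)/2))⁻¹ :=
          inv_anti₀ (by positivity) (mul_le_mul_of_nonneg_left hhalf hC₀.le)
        have hkk2 : (k:ℝ)^(1-β) * (k:ℝ)⁻¹ = (k:ℝ)^(-β) := by
          rw [← Real.rpow_neg_one (k:ℝ), ← Real.rpow_add hk0]; congr 1; ring
        calc (k:ℝ)^(1-β) * (C₀ * ((k:ℝ)-j))⁻¹
            ≤ (k:ℝ)^(1-β) * (C₀ * ((k:ℝ)/2))⁻¹ :=
              mul_le_mul_of_nonneg_left hd (by positivity)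
          _ = (2/C₀) * ((k:ℝ)^(1-β) * (k:ℝ)⁻¹) := by
              rw [mul_inv]; field_simp
          _ = (2/C₀) * (k:ℝ)^(-β) := by rw [hkk2]
          _ ≤ 2^(α+β)/C₀ * (k:ℝ)^(-β) := by
              apply mul_le_mul_of_nonneg_right _ (by positivity)
              exact (div_le_div_iff_of_pos_right hC₀).mpr h2two
      rw [hgx]
      linarith
  · -- Case B : k < j
    have hkj : k < j := by omega
    have hcast : (0:ℝ) < (j:ℝ) - k := by
      have : (k:ℝ) < j := by exact_mod_cast hkj
      linarith
    set m : ℕ := min k (j - k) with hm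
    have hm1 : 1 ≤ m := by omega
    have hm0 : (0:ℝ) < (m:ℝ) := by exact_mod_cast hm1
    have hg := hh_gap' α C₀ κ hgap j k hk hkj
    have hsub : Finset.Ico k (k+m) ⊆ Finset.Ico k j := by
      intro l hl
      simp only [Finset.mem_Ico] at hl ⊢
      omega
    have hlow1 : ∑ l ∈ Finset.Ico k (k+m), (l:ℝ)^(-(α+1)) ≤
        ∑ l ∈ Finset.Ico k j, (l:ℝ)^(-(α+1)) :=
      Finset.sum_le_sum_of_subset_of_nonneg hsub
        (fun i _ _ => Real.rpow_nonneg (Nat.cast_nonneg i) _)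
    have hlow2 : (m:ℝ) * (2*(k:ℝ))^(-(α+1)) ≤ ∑ l ∈ Finset.Ico k (k+m), (l:ℝ)^(-(α+1)) := by
      have hcard := Finset.card_nsmul_le_sum (Finset.Ico k (k+m))
        (fun l => (l:ℝ)^(-(α+1))) ((2*(k:ℝ))^(-(α+1)))
        (fun l hl => by
          simp only [Finset.mem_Ico] at hl
          have hl0 : (0:ℝ) < l := by
            have : 1 ≤ l := le_trans hk hl.1
            exact_mod_cast this
          have hl2k : (l:ℝ) ≤ 2*(k:ℝ) := by
            have : l ≤ 2*k := by omega
            exact_mod_cast this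
          exact Real.rpow_le_rpow_of_nonpos hl0 hl2k (by linarith))
      rw [Nat.card_Ico, nsmul_eq_mul] at hcard
      have : k + m - k = m := by omega
      rw [this] at hcard
      exact hcard
    set D : ℝ := C₀ * ((m:ℝ) * (2*(k:ℝ))^(-(α+1))) with hD
    have hD0 : 0 < D := by
      have := Real.rpow_pos_of_pos (show (0:ℝ) < 2*(k:ℝ) by linarith) (-(α+1))
      positivity
    have hDle : D ≤ κ k - κ j := by
      have := mul_le_mul_of_nonneg_left (le_trans hlow2 hlow1) hC₀.le
      linarith
    have habs : |κ j - κ k| = κ k - κ j := by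
      rw [abs_sub_comm]
      exact abs_of_pos (lt_of_lt_of_le hD0 hDle)
    have hinv : |κ j - κ k|⁻¹ ≤ D⁻¹ := by
      rw [habs]; exact inv_anti₀ hD0 hDle
    have hterm : (k:ℝ)^(-(α+β)) * |κ j - κ k|⁻¹ ≤
        2^(α+1) * (k:ℝ)^(1-β) * (C₀ * (m:ℝ))⁻¹ := by
      have h1 : (k:ℝ)^(-(α+β)) * |κ j - κ k|⁻¹ ≤ (k:ℝ)^(-(α+β)) * D⁻¹ :=
        mul_le_mul_of_nonneg_left hinv (Real.rpow_nonneg hk0.le _)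
      have h2 : (k:ℝ)^(-(α+β)) * D⁻¹ = 2^(α+1) * (k:ℝ)^(1-β) * (C₀ * (m:ℝ))⁻¹ := by
        rw [hD, Real.mul_rpow (by norm_num : (0:ℝ) ≤ 2) hk0.le]
        rw [Real.rpow_neg (by norm_num : (0:ℝ) ≤ 2) (α+1), Real.rpow_neg hk0.le (α+1)]
        rw [mul_inv, mul_inv, mul_inv, inv_inv, inv_inv, mul_inv]
        have := hkk (α+1)
        have e : (1:ℝ)-β = (α+1)-(α+β) := by ring
        rw [e, ← this]
        ring
      linarith
    rcases Nat.lt_or_ge j (2*k) with hj2k | hj2k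
    · -- B2 : j/2 < k < j
      have hmv : m = j - k := by omega
      have hmc : (m:ℝ) = (j:ℝ) - k := by
        rw [hmv, Nat.cast_sub hkj.le]
      have hgx : hh_g α β C₀ j k
          = 2^(α+β)/C₀ * (j:ℝ)^(1-β) * |(k:ℝ) - (j:ℝ)| ^ (-(1/2):ℝ) := by
        unfold hh_g; rw [if_pos ⟨hk, by omega, hne⟩]
      have habs2 : |(k:ℝ) - (j:ℝ)| = (j:ℝ) - k := by
        rw [abs_sub_comm]; exact abs_of_pos hcast
      have hone : (1:ℝ) ≤ (j:ℝ) - k := by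
        have : (k:ℝ) + 1 ≤ j := by exact_mod_cast hkj
        linarith
      have b1 : (k:ℝ)^(1-β) ≤ 2^(β-1) * (j:ℝ)^(1-β) := by
        have hhalf : (j:ℝ)/2 ≤ (k:ℝ) := by
          have : (j:ℝ) < 2*(k:ℝ) := by exact_mod_cast hj2k
          linarith
        have s1 : (k:ℝ)^(1-β) ≤ ((j:ℝ)/2)^(1-β) :=
          Real.rpow_le_rpow_of_nonpos (by positivity) hhalf (by linarith)
        have s2 : ((j:ℝ)/2)^(1-β) = 2^(β-1) * (j:ℝ)^(1-β) := by
          rw [Real.div_rpow hj0.le (by norm_num : (0:ℝ) ≤ 2)]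
          rw [div_eq_mul_inv, ← Real.rpow_neg (by norm_num : (0:ℝ) ≤ 2)]
          have e : -(1-β) = β-1 := by ring
          rw [e]
          ring
        linarith
      have b2 : ((m:ℝ))⁻¹ ≤ ((j:ℝ)-k)^(-(1/2):ℝ) := by
        rw [hmc, ← Real.rpow_neg_one]
        exact Real.rpow_le_rpow_of_exponent_le hone (by norm_num)
      have key : 2^(α+1) * (k:ℝ)^(1-β) * (C₀ * (m:ℝ))⁻¹ ≤
          2^(α+β)/C₀ * (j:ℝ)^(1-β) * ((j:ℝ)-k)^(-(1/2):ℝ) := by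
        have h2ab : (2:ℝ)^(α+1) * 2^(β-1) = 2^(α+β) := by
          rw [← Real.rpow_add (by norm_num : (0:ℝ) < 2)]
          congr 1; ring
        rw [mul_inv]
        calc (2:ℝ)^(α+1) * (k:ℝ)^(1-β) * (C₀⁻¹ * ((m:ℝ))⁻¹)
            = C₀⁻¹ * (2^(α+1) * ((k:ℝ)^(1-β) * ((m:ℝ))⁻¹)) := by ring
          _ ≤ C₀⁻¹ * (2^(α+1) * ((2^(β-1) * (j:ℝ)^(1-β)) * ((j:ℝ)-k)^(-(1/2):ℝ))) := by
              apply mul_le_mul_of_nonneg_left _ (by positivity)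
              apply mul_le_mul_of_nonneg_left _ (by positivity)
              exact mul_le_mul b1 b2 (by positivity) (by positivity)
          _ = 2^(α+β)/C₀ * (j:ℝ)^(1-β) * ((j:ℝ)-k)^(-(1/2):ℝ) := by
              rw [div_eq_mul_inv, ← h2ab]; ring
      have hfirst : (0:ℝ) ≤ 2^(α+β)/C₀ * (k:ℝ)^(-β) := by positivity
      rw [hgx, habs2]
      linarith
    · -- B1 : 2k ≤ j
      have hmv : m = k := by omega
      have key : 2^(α+1) * (k:ℝ)^(1-β) * (C₀ * (m:ℝ))⁻¹ ≤ 2^(α+β)/C₀ * (k:ℝ)^(-β) := by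
        rw [hmv]
        have hkk2 : (k:ℝ)^(1-β) * (k:ℝ)⁻¹ = (k:ℝ)^(-β) := by
          rw [← Real.rpow_neg_one (k:ℝ), ← Real.rpow_add hk0]; congr 1; ring
        calc (2:ℝ)^(α+1) * (k:ℝ)^(1-β) * (C₀ * (k:ℝ))⁻¹
            = (2^(α+1)/C₀) * ((k:ℝ)^(1-β) * (k:ℝ)⁻¹) := by
              rw [mul_inv, div_eq_mul_inv]; ring
          _ = (2^(α+1)/C₀) * (k:ℝ)^(-β) := by rw [hkk2]
          _ ≤ 2^(α+β)/C₀ * (k:ℝ)^(-β) := by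
              apply mul_le_mul_of_nonneg_right _ (by positivity)
              exact (div_le_div_iff_of_pos_right hC₀).mpr h2a1
      have hgn := hh_g_nonneg α β C₀ hC₀ j k
      linarith

lemma hh_sqrt_sum (n : ℕ) :
    ∑ d ∈ Finset.Ico 1 (n + 1), ((d : ℝ)) ^ (-(1/2) : ℝ) ≤ 2 * Real.sqrt n := by
  induction n with
  | zero => simp
  | succ n ih =>
    rw [Finset.sum_Ico_succ_top (by omega : 1 ≤ n + 1)]
    have hb : (0:ℝ) < Real.sqrt ((n:ℝ)+1) := Real.sqrt_pos.mpr (by positivity)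
    have e : (((n+1 : ℕ)):ℝ) ^ (-(1/2) : ℝ) = (Real.sqrt ((n:ℝ)+1))⁻¹ := by
      push_cast
      rw [Real.rpow_neg (by positivity), Real.sqrt_eq_rpow]
    have key : (Real.sqrt ((n:ℝ)+1))⁻¹ ≤ 2 * Real.sqrt ((n:ℝ)+1) - 2 * Real.sqrt n := by
      rw [inv_eq_one_div, div_le_iff₀ hb]
      nlinarith [Real.sq_sqrt (show (0:ℝ) ≤ (n:ℝ) by positivity),
        Real.sq_sqrt (show (0:ℝ) ≤ (n:ℝ)+1 by positivity),
        Real.sqrt_nonneg (n:ℝ), Real.sqrt_nonneg ((n:ℝ)+1),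
        sq_nonneg (Real.sqrt ((n:ℝ)+1) - Real.sqrt n)]
    rw [e]
    push_cast
    linarith

lemma hh_ico_bound (j : ℕ) (hj : 1 ≤ j) :
    ∑ d ∈ Finset.Ico 1 j, ((d:ℝ)) ^ (-(1/2) : ℝ) ≤ 2 * Real.sqrt j := by
  obtain ⟨m, rfl⟩ : ∃ m, j = m + 1 := ⟨j - 1, by omega⟩
  calc ∑ d ∈ Finset.Ico 1 (m+1), ((d:ℝ)) ^ (-(1/2) : ℝ) ≤ 2 * Real.sqrt m := hh_sqrt_sum m
    _ ≤ 2 * Real.sqrt ((m:ℝ)+1) := by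
        have := Real.sqrt_le_sqrt (show (m:ℝ) ≤ (m:ℝ)+1 by linarith)
        linarith
    _ = 2 * Real.sqrt ((m+1 : ℕ):ℝ) := by push_cast; ring_nf

/-- The deterministic series bound used in display (5.27) of Hall–Horowitz: under the
eigenvalue spacing condition `κ_j - κ_{j+1} ≥ C₀ j^{-(α+1)}` with `α > 1` and
`β > α/2 + 1`, the sums `Σ_{k ≠ j} k^{-(α+β)} |κ_j - κ_k|⁻¹` are bounded uniformly
in `j`.  (The series of nonnegative terms is expressed through its partial sums over
arbitrary finite sets of indices `k ≥ 1`, `k ≠ j`.) -/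
theorem stmt_9
    (α β C₀ : ℝ) (hα : 1 < α) (hβ : α / 2 + 1 < β) (hC₀ : 0 < C₀)
    (κ : ℕ → ℝ)
    (hpos : ∀ j : ℕ, 1 ≤ j → 0 < κ j)
    (hmono : ∀ j : ℕ, 1 ≤ j → κ (j + 1) ≤ κ j)
    (hgap : ∀ j : ℕ, 1 ≤ j → C₀ * (j : ℝ) ^ (-(α + 1)) ≤ κ j - κ (j + 1)) :
    ∃ C : ℝ, 0 < C ∧ ∀ j : ℕ, 1 ≤ j → ∀ s : Finset ℕ,
      (∀ k ∈ s, 1 ≤ k ∧ k ≠ j) →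
      ∑ k ∈ s, (k : ℝ) ^ (-(α + β)) * |κ j - κ k|⁻¹ ≤ C := by
  set E : ℝ := (2:ℝ)^(α+β)/C₀ with hEdef
  have hE0 : 0 < E := by positivity
  have hsummable : Summable (fun n : ℕ => (n:ℝ)^(-β)) :=
    Real.summable_nat_rpow.mpr (by linarith)
  set Z : ℝ := ∑' n : ℕ, (n:ℝ)^(-β) with hZdef
  have hZ0 : 0 ≤ Z := tsum_nonneg (fun n => Real.rpow_nonneg (Nat.cast_nonneg n) _)
  refine ⟨E * (Z + 4), by positivity, ?_⟩
  intro j hj s hs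
  have hj1 : (1:ℝ) ≤ (j:ℝ) := by exact_mod_cast hj
  have hstep : ∑ k ∈ s, (k:ℝ)^(-(α+β)) * |κ j - κ k|⁻¹ ≤
      ∑ k ∈ s, (E * (k:ℝ)^(-β) + hh_g α β C₀ j k) :=
    Finset.sum_le_sum (fun k hkmem =>
      hh_key α β C₀ hα hβ hC₀ κ hgap j k hj (hs k hkmem).1 (hs k hkmem).2)
  rw [Finset.sum_add_distrib, ← Finset.mul_sum] at hstep
  have h1 : ∑ k ∈ s, (k:ℝ)^(-β) ≤ Z :=
    Summable.sum_le_tsum s (fun n _ => Real.rpow_nonneg (Nat.cast_nonneg n) _) hsummable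
  have h2 : ∑ k ∈ s, hh_g α β C₀ j k ≤ ∑ k ∈ Finset.Ico 1 (2*j), hh_g α β C₀ j k := by
    have e1 : ∑ k ∈ s, hh_g α β C₀ j k = ∑ k ∈ s ∩ Finset.Ico 1 (2*j), hh_g α β C₀ j k := by
      refine (Finset.sum_subset Finset.inter_subset_left ?_).symm
      intro x hx hnx
      unfold hh_g
      rw [if_neg]
      rintro ⟨c1, c2, c3⟩
      exact hnx (Finset.mem_inter.mpr ⟨hx, Finset.mem_Ico.mpr ⟨c1, c2⟩⟩)
    rw [e1]
    exact Finset.sum_le_sum_of_subset_of_nonneg Finset.inter_subset_right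
      (fun i _ _ => hh_g_nonneg α β C₀ hC₀ j i)
  -- bound the Ico sum
  have hL : ∑ k ∈ Finset.Ico 1 j, hh_g α β C₀ j k ≤ E * (j:ℝ)^(1-β) * (2 * Real.sqrt j) := by
    have e : ∀ k ∈ Finset.Ico 1 j, hh_g α β C₀ j k
        = E * (j:ℝ)^(1-β) * (((j:ℝ)-(k:ℝ)) ^ (-(1/2):ℝ)) := by
      intro k hkm
      simp only [Finset.mem_Ico] at hkm
      unfold hh_g
      rw [if_pos ⟨hkm.1, by omega, by omega⟩]
      rw [abs_sub_comm, abs_of_pos (show (0:ℝ) < (j:ℝ)-(k:ℝ) by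
        have : (k:ℝ) < j := by exact_mod_cast hkm.2
        linarith)]
    rw [Finset.sum_congr rfl e, ← Finset.mul_sum]
    have hre : ∑ k ∈ Finset.Ico 1 j, ((j:ℝ)-(k:ℝ))^(-(1/2):ℝ)
        = ∑ d ∈ Finset.Ico 1 j, (d:ℝ)^(-(1/2):ℝ) := by
      refine Finset.sum_nbij' (fun k => j - k) (fun d => j - d) ?_ ?_ ?_ ?_ ?_
      · intro a ha; simp only [Finset.mem_Ico] at *; omega
      · intro a ha; simp only [Finset.mem_Ico] at *; omega
      · intro a ha; simp only [Finset.mem_Ico] at ha; omega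
      · intro a ha; simp only [Finset.mem_Ico] at ha; omega
      · intro a ha; simp only [Finset.mem_Ico] at ha
        congr 1
        exact (Nat.cast_sub (by omega)).symm
    rw [hre]
    exact mul_le_mul_of_nonneg_left (hh_ico_bound j hj) (by positivity)
  have hR : ∑ k ∈ Finset.Ico (j+1) (2*j), hh_g α β C₀ j k
      ≤ E * (j:ℝ)^(1-β) * (2 * Real.sqrt j) := by
    have e : ∀ k ∈ Finset.Ico (j+1) (2*j), hh_g α β C₀ j k
        = E * (j:ℝ)^(1-β) * (((k:ℝ)-(j:ℝ)) ^ (-(1/2):ℝ)) := by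
      intro k hkm
      simp only [Finset.mem_Ico] at hkm
      unfold hh_g
      rw [if_pos ⟨by omega, hkm.2, by omega⟩]
      rw [abs_of_pos (show (0:ℝ) < (k:ℝ)-(j:ℝ) by
        have : (j:ℝ) < k := by exact_mod_cast (show j < k by omega)
        linarith)]
    rw [Finset.sum_congr rfl e, ← Finset.mul_sum]
    have hre : ∑ k ∈ Finset.Ico (j+1) (2*j), ((k:ℝ)-(j:ℝ))^(-(1/2):ℝ)
        = ∑ d ∈ Finset.Ico 1 j, (d:ℝ)^(-(1/2):ℝ) := by
      refine Finset.sum_nbij' (fun k => k - j) (fun d => d + j) ?_ ?_ ?_ ?_ ?_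
      · intro a ha; simp only [Finset.mem_Ico] at *; omega
      · intro a ha; simp only [Finset.mem_Ico] at *; omega
      · intro a ha; simp only [Finset.mem_Ico] at ha; omega
      · intro a ha; simp only [Finset.mem_Ico] at ha; omega
      · intro a ha; simp only [Finset.mem_Ico] at ha
        congr 1
        rw [Nat.cast_sub (by omega)]
    rw [hre]
    exact mul_le_mul_of_nonneg_left (hh_ico_bound j hj) (by positivity)
  have hgjj : hh_g α β C₀ j j = 0 := by
    unfold hh_g; rw [if_neg]; rintro ⟨_, _, c3⟩; exact c3 rfl
  have hsplit : ∑ k ∈ Finset.Ico 1 (2*j), hh_g α β C₀ j k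
      = ∑ k ∈ Finset.Ico 1 j, hh_g α β C₀ j k
        + (hh_g α β C₀ j j + ∑ k ∈ Finset.Ico (j+1) (2*j), hh_g α β C₀ j k) := by
    rw [← Finset.sum_Ico_consecutive (fun k => hh_g α β C₀ j k) hj (by omega : j ≤ 2*j)]
    rw [Finset.sum_eq_sum_Ico_succ_bot (by omega : j < 2*j)]
  have hsqrt : E * (j:ℝ)^(1-β) * (2 * Real.sqrt j) ≤ 2*E := by
    have e : (j:ℝ)^(1-β) * Real.sqrt (j:ℝ) = (j:ℝ)^(1-β+1/2) := by
      rw [Real.sqrt_eq_rpow, Real.rpow_add (by linarith : (0:ℝ) < (j:ℝ))]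
    have hle1 : (j:ℝ)^(1-β+1/2) ≤ 1 :=
      Real.rpow_le_one_of_one_le_of_nonpos hj1 (by linarith)
    calc E * (j:ℝ)^(1-β) * (2 * Real.sqrt j)
        = 2*E*((j:ℝ)^(1-β) * Real.sqrt (j:ℝ)) := by ring
      _ = 2*E*(j:ℝ)^(1-β+1/2) := by rw [e]
      _ ≤ 2*E*1 := mul_le_mul_of_nonneg_left hle1 (by positivity)
      _ = 2*E := by ring
  have hmul : E * (∑ k ∈ s, (k:ℝ)^(-β)) ≤ E * Z := mul_le_mul_of_nonneg_left h1 hE0.le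
  have final : ∑ k ∈ s, hh_g α β C₀ j k ≤ 4*E := by
    rw [hsplit] at h2
    linarith
  linarith
end
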